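/- Let (X, ρ) be a metric space with ρ ≤ 2. Define ρ̂ on X̂ = ([0,∞) × X) ∪ {Δ∞} (where Δ∞ is an added point representing (∞,Δ)) by ρ̂((s₁,x₁),(s₂,x₂)) = ρ(x₁,x₂)(1 - max(g(s₁),g(s₂))) + |g(s₁) - g(s₂)| for points with finite first coordinate, ρ̂((s,x), Δ∞) = 1 - g(s), and ρ̂(Δ∞, Δ∞) = 0, where g(s) = s/(s+1). Then ρ̂ is a metric on X̂. -/

import Mathlib

open scoped NNReal ENNReal

/-- `g(s) = s/(s+1)`, mapping `[0,∞)` into `[0,1)`. -/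
noncomputable def g (s : ℝ≥0) : ℝ := (s : ℝ) / ((s : ℝ) + 1)

/-- The metric `ρ̂` on `X̂ = ([0,∞) × X) ∪ {Δ∞}`, where `Δ∞` is encoded as `none`
and a pair `(s, x)` as `some (s, x)`. -/
noncomputable def hatDist {X : Type*} [MetricSpace X] :
    Option (ℝ≥0 × X) → Option (ℝ≥0 × X) → ℝ
  | some p, some q => dist p.2 q.2 * (1 - max (g p.1) (g q.1)) + |g p.1 - g q.1|
  | some p, none => 1 - g p.1
  | none, some q => 1 - g q.1
  | none, none => 0

/-! `ρ̂` is a cone metric: `(s, x)` sits at height `g s ∈ [0, 1)` above `x` and `Δ∞` is the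
apex at height `1`. Two points at heights `a, b` over base points at distance `d` are at
distance `d (1 - max a b) + |a - b|`; the apex term needs no base distance since `1 - max a 1 = 0`.
The triangle inequality for this formula is elementary: if the middle height `b` is at most
`max a c`, both weights `1 - max` on the right dominate `1 - max a c`; otherwise the detour
through `b` gains `2 (b - max a c)` in height, which pays for the at most `2 (b - max a c)`
lost on the base term because the base distance is at most `2`. -/

lemma g_lt_one (s : ℝ≥0) : g s < 1 := by
  unfold g
  rw [div_lt_one (by positivity)]
  linarith [s.coe_nonneg]

lemma g_injective : Function.Injective g := by
  intro s t h
  unfold g at h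
  field_simp at h
  exact_mod_cast (by linarith : (s : ℝ) = t)

noncomputable def coneDist (d a b : ℝ) : ℝ := d * (1 - max a b) + |a - b|

lemma coneDist_comm (d a b : ℝ) : coneDist d a b = coneDist d b a := by
  rw [coneDist, coneDist, max_comm, abs_sub_comm]

lemma coneDist_nonneg {d a b : ℝ} (hd : 0 ≤ d) (ha : a ≤ 1) (hb : b ≤ 1) :
    0 ≤ coneDist d a b :=
  add_nonneg (mul_nonneg hd (sub_nonneg.2 (max_le ha hb))) (abs_nonneg _)

lemma coneDist_eq_zero_iff {d a b : ℝ} (hd : 0 ≤ d) (ha : a ≤ 1) (hb : b ≤ 1) :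
    coneDist d a b = 0 ↔ a = b ∧ d * (1 - a) = 0 := by
  have hbase : 0 ≤ d * (1 - max a b) := mul_nonneg hd (sub_nonneg.2 (max_le ha hb))
  constructor
  · intro h
    have hab : |a - b| = 0 := by
      unfold coneDist at h; linarith [abs_nonneg (a - b)]
    obtain rfl : a = b := sub_eq_zero.1 (abs_eq_zero.1 hab)
    simpa [coneDist] using h
  · rintro ⟨rfl, h⟩
    simpa [coneDist] using h

lemma coneDist_triangle {a b c d₁₂ d₂₃ d₁₃ : ℝ} (ha : a ≤ 1) (hb : b ≤ 1) (hc : c ≤ 1)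
    (hd₁₂ : 0 ≤ d₁₂) (hd₂₃ : 0 ≤ d₂₃) (htri : d₁₃ ≤ d₁₂ + d₂₃) (hd₁₃ : d₁₃ ≤ 2) :
    coneDist d₁₃ a c ≤ coneDist d₁₂ a b + coneDist d₂₃ b c := by
  unfold coneDist
  rcases le_or_gt b (max a c) with hb_le | hb_gt
  · have hab : max a b ≤ max a c := max_le (le_max_left a c) hb_le
    have hbc : max b c ≤ max a c := max_le hb_le (le_max_right a c)
    have hac : 0 ≤ 1 - max a c := sub_nonneg.2 (max_le ha hc)
    calc d₁₃ * (1 - max a c) + |a - c|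
        ≤ d₁₂ * (1 - max a c) + d₂₃ * (1 - max a c) + (|a - b| + |b - c|) := by
          nlinarith [abs_sub_le a b c]
      _ ≤ d₁₂ * (1 - max a b) + d₂₃ * (1 - max b c) + (|a - b| + |b - c|) := by
          gcongr
      _ = _ := by ring
  · have hab : max a b = b := max_eq_right (le_max_left a c |>.trans hb_gt.le)
    have hbc : max b c = b := max_eq_left (le_max_right a c |>.trans hb_gt.le)
    have hdetour : |a - b| + |b - c| = |a - c| + 2 * (b - max a c) := by
      rcases le_total a c with h | h
      · rw [max_eq_right h] at hb_gt ⊢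
        rw [abs_of_neg (by linarith), abs_of_pos (by linarith), abs_of_nonpos (by linarith)]
        ring
      · rw [max_eq_left h] at hb_gt ⊢
        rw [abs_of_neg (by linarith), abs_of_pos (by linarith), abs_of_nonneg (by linarith)]
        ring
    calc d₁₃ * (1 - max a c) + |a - c|
        = d₁₃ * (1 - b) + d₁₃ * (b - max a c) + |a - c| := by ring
      _ ≤ (d₁₂ + d₂₃) * (1 - b) + 2 * (b - max a c) + |a - c| := by
          gcongr
      _ = _ := by rw [hab, hbc]; linarith

section hatSpace

variable {X : Type*}

noncomputable def hatHeight : Option (ℝ≥0 × X) → ℝ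
  | some p => g p.1
  | none => 1

lemma hatHeight_le_one (p : Option (ℝ≥0 × X)) : hatHeight p ≤ 1 := by
  cases p with
  | none => exact le_rfl
  | some p => exact (g_lt_one p.1).le

variable [MetricSpace X]

/-- Off the finite part any value in `[1, 2]` works: it only meets the weight `1 - 1 = 0`,
and the triangle inequality and the bound `2` still hold. -/
noncomputable def hatBaseDist : Option (ℝ≥0 × X) → Option (ℝ≥0 × X) → ℝ
  | some p, some q => dist p.2 q.2
  | none, none => 0
  | _, _ => 2

lemma hatBaseDist_nonneg (p q : Option (ℝ≥0 × X)) : 0 ≤ hatBaseDist p q := by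
  rcases p with _ | p <;> rcases q with _ | q <;> simp [hatBaseDist]

lemma hatBaseDist_comm (p q : Option (ℝ≥0 × X)) : hatBaseDist p q = hatBaseDist q p := by
  rcases p with _ | p <;> rcases q with _ | q <;> simp [hatBaseDist, dist_comm]

lemma hatBaseDist_le_two (hρ : ∀ x y : X, dist x y ≤ 2) (p q : Option (ℝ≥0 × X)) :
    hatBaseDist p q ≤ 2 := by
  rcases p with _ | p <;> rcases q with _ | q <;> simp [hatBaseDist, hρ]

lemma hatBaseDist_triangle (hρ : ∀ x y : X, dist x y ≤ 2) (p q r : Option (ℝ≥0 × X)) :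
    hatBaseDist p r ≤ hatBaseDist p q + hatBaseDist q r := by
  rcases p with _ | p <;> rcases q with _ | q <;> rcases r with _ | r <;>
    simp only [hatBaseDist]
  all_goals first
    | exact dist_triangle _ _ _
    | exact le_add_of_nonneg_left dist_nonneg
    | exact le_add_of_nonneg_right dist_nonneg
    | exact (hρ _ _).trans (by norm_num)
    | norm_num

lemma hatDist_eq_coneDist (p q : Option (ℝ≥0 × X)) :
    hatDist p q = coneDist (hatBaseDist p q) (hatHeight p) (hatHeight q) := by
  rcases p with _ | p <;> rcases q with _ | q <;>
    simp [hatDist, coneDist, hatBaseDist, hatHeight, (g_lt_one _).le,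
      fun s => abs_of_neg (sub_neg.2 (g_lt_one s)), fun s => abs_of_pos (sub_pos.2 (g_lt_one s))]

lemma hatDist_eq_zero_iff (p q : Option (ℝ≥0 × X)) : hatDist p q = 0 ↔ p = q := by
  rw [hatDist_eq_coneDist, coneDist_eq_zero_iff (hatBaseDist_nonneg p q) (hatHeight_le_one p)
    (hatHeight_le_one q)]
  rcases p with _ | p <;> rcases q with _ | q <;>
    simp [hatBaseDist, hatHeight, (g_lt_one _).ne, (g_lt_one _).ne', sub_eq_zero,
      g_injective.eq_iff, Prod.ext_iff]

end hatSpace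

/-- `ρ̂` is a metric on `X̂`: nonnegative, symmetric, vanishing exactly on the
diagonal, and satisfying the triangle inequality. -/
theorem stmt_3 {X : Type*} [MetricSpace X] (hρ : ∀ x y : X, dist x y ≤ 2) :
    (∀ p q : Option (ℝ≥0 × X), 0 ≤ hatDist p q) ∧
    (∀ p q : Option (ℝ≥0 × X), hatDist p q = hatDist q p) ∧
    (∀ p q : Option (ℝ≥0 × X), hatDist p q = 0 ↔ p = q) ∧
    (∀ p q r : Option (ℝ≥0 × X), hatDist p r ≤ hatDist p q + hatDist q r) := by
  refine ⟨fun p q => ?_, fun p q => ?_, hatDist_eq_zero_iff, fun p q r => ?_⟩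
  · rw [hatDist_eq_coneDist]
    exact coneDist_nonneg (hatBaseDist_nonneg p q) (hatHeight_le_one p) (hatHeight_le_one q)
  · rw [hatDist_eq_coneDist, hatDist_eq_coneDist, hatBaseDist_comm, coneDist_comm]
  · simp only [hatDist_eq_coneDist]
    exact coneDist_triangle (hatHeight_le_one p) (hatHeight_le_one q) (hatHeight_le_one r)
      (hatBaseDist_nonneg p q) (hatBaseDist_nonneg q r) (hatBaseDist_triangle hρ p q r)
      (hatBaseDist_le_two hρ p r)
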